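/- arXiv:2409.04155 — 4 statements merged into one kernel-verified Lean document; each statement's English description precedes it below -/
import Mathlib

section
/- For every Hermitian positive semidefinite matrix R ∈ ℂ^{M_t×M_t} with Re(tr R) ≤ P that satisfies the IRS amplification power constraint (L·Re(e(θ₁,M_t)ᵀ · R · conj(e(θ₁,M_t))) + σ_z²)·(∑_{n=0}^{N−1} a_n²) ≤ P_A, and for every phase-shift matrix Φ = diag(exp(iφ_0),…,exp(iφ_{N−1})) with φ_n ∈ ℝ, the beamforming-gain objective Re(e(θ₀,N)ᵀ · A·Φ·G · R · Gᴴ·Φᴴ·Aᴴ · conj(e(θ₀,N))) is at most L·(∑_{n=0}^{N−1} a_n)²·M_t·P_x, where P_x = min{P, (P_A/(∑_{n=0}^{N−1} a_n²) − σ_z²)/(L·M_t)}. -/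
open Matrix Complex BigOperators
open scoped ComplexOrder

/-- Steering vector of a ULA of size `K` towards angle `θ`:
`e(θ,K)_k = exp(i·π·k·sin θ)` for `k = 0,…,K−1`. -/
noncomputable def steer (θ : ℝ) (K : ℕ) : Fin K → ℂ :=
  fun k => Complex.exp (Complex.I * ((Real.pi * (k : ℕ) * Real.sin θ : ℝ) : ℂ))

/-- BS–IRS channel `G = √L · e(θ₂,N)·e(θ₁,M_t)ᵀ`. -/
noncomputable def Gmat (L θ₁ θ₂ : ℝ) (N Mt : ℕ) : Matrix (Fin N) (Fin Mt) ℂ :=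
  (Real.sqrt L : ℂ) • vecMulVec (steer θ₂ N) (steer θ₁ Mt)

/-- Amplification matrix `A = diag(a_0,…,a_{N−1})`. -/
noncomputable def Amat {N : ℕ} (a : Fin N → ℝ) : Matrix (Fin N) (Fin N) ℂ :=
  diagonal fun n => (a n : ℂ)

/-- Phase-shift matrix `Φ = diag(exp(iφ_0),…,exp(iφ_{N−1}))`. -/
noncomputable def Phimat {N : ℕ} (φ : Fin N → ℝ) : Matrix (Fin N) (Fin N) ℂ :=
  diagonal fun n => Complex.exp (Complex.I * ((φ n : ℝ) : ℂ))

lemma steer_abs (θ : ℝ) (K : ℕ) (k : Fin K) : ‖steer θ K k‖ = 1 := by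
  simp [steer, Complex.norm_exp]

/-- Rank-one sandwich identity. -/
lemma mid_identity (L : ℝ) (N Mt : ℕ) (v : Fin N → ℂ) (u : Fin Mt → ℂ)
    (R : Matrix (Fin Mt) (Fin Mt) ℂ) :
    ((Real.sqrt L : ℂ) • vecMulVec v u) * R * ((Real.sqrt L : ℂ) • vecMulVec v u)ᴴ
      = (((Real.sqrt L : ℂ) * (Real.sqrt L : ℂ)) * (u ⬝ᵥ (R *ᵥ star u))) •
          vecMulVec v (star v) := by
  ext i j
  simp only [Matrix.mul_apply, Matrix.smul_apply, conjTranspose_apply, vecMulVec_apply,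
    smul_eq_mul, Matrix.smul_mul, Matrix.mul_smul, dotProduct, mulVec, Pi.star_apply,
    star_mul', RCLike.star_def, Complex.conj_ofReal, Finset.mul_sum, Finset.sum_mul]
  rw [Finset.sum_comm]
  apply Finset.sum_congr rfl; intro k _
  apply Finset.sum_congr rfl; intro l _
  ring

/-- Diagonal sandwich quadratic-form identity. -/
lemma diag_sandwich (N : ℕ) (d v w : Fin N → ℂ) (t : ℂ) :
    w ⬝ᵥ ((diagonal d * (t • vecMulVec v (star v)) * (diagonal d)ᴴ) *ᵥ star w)
    = t * ((∑ i, w i * d i * v i) * (starRingEnd ℂ) (∑ i, w i * d i * v i)) := by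
  simp only [diagonal_conjTranspose, dotProduct, mulVec, Matrix.mul_diagonal,
    Matrix.diagonal_mul, Matrix.smul_apply, vecMulVec_apply, smul_eq_mul, Pi.star_apply,
    map_sum, _root_.map_mul, RCLike.star_def, Finset.mul_sum, Finset.sum_mul]
  rw [Finset.sum_comm]
  apply Finset.sum_congr rfl; intro i _
  apply Finset.sum_congr rfl; intro j _
  ring

/-- Quadratic form of `Bᴴ B` at a unimodular vector is at most `Mt · tr(Bᴴ B)`. -/
lemma quad_le_trace (Mt : ℕ) (B : Matrix (Fin Mt) (Fin Mt) ℂ) (u : Fin Mt → ℂ)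
    (hu : ∀ k, ‖u k‖ = 1) :
    (u ⬝ᵥ ((Bᴴ * B) *ᵥ star u)).re ≤ (Mt : ℝ) * ((Bᴴ * B).trace).re := by
  set y : Fin Mt → ℂ := B *ᵥ star u with hy
  have h1 : u ⬝ᵥ ((Bᴴ * B) *ᵥ star u) = star y ⬝ᵥ y := by
    rw [← mulVec_mulVec, dotProduct_mulVec, hy, star_mulVec, star_star]
  have h2 : (star y ⬝ᵥ y).re = ∑ i, ‖y i‖ ^ 2 := by
    simp [dotProduct, Complex.re_sum, ← Complex.normSq_eq_norm_sq,
      Complex.normSq_eq_conj_mul_self, Complex.normSq_apply]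
  have h3 : ∀ i, ‖y i‖ ^ 2 ≤ (Mt : ℝ) * ∑ k, ‖B i k‖ ^ 2 := by
    intro i
    have hb : ‖y i‖ ≤ ∑ k, ‖B i k‖ := by
      calc ‖y i‖ ≤ ∑ k, ‖B i k * star u k‖ := by
              simpa [hy, mulVec, dotProduct] using
                (norm_sum_le Finset.univ (fun k => B i k * star u k))
        _ = ∑ k, ‖B i k‖ := by
              simp [_root_.map_mul, hu]
    calc ‖y i‖ ^ 2 ≤ (∑ k, ‖B i k‖) ^ 2 := by
          exact pow_le_pow_left₀ (norm_nonneg _) hb 2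
      _ ≤ (Mt : ℝ) * ∑ k, ‖B i k‖ ^ 2 := by
          simpa using sq_sum_le_card_mul_sum_sq (s := Finset.univ)
            (f := fun k => ‖B i k‖)
  have h4 : ((Bᴴ * B).trace).re = ∑ j, ∑ i, ‖B i j‖ ^ 2 := by
    simp [Matrix.trace, Matrix.mul_apply, Matrix.diag, Complex.re_sum,
      ← Complex.normSq_eq_norm_sq, Complex.normSq_eq_conj_mul_self, Complex.normSq_apply]
  rw [h1, h2, h4]
  calc (∑ i, ‖y i‖ ^ 2) ≤ ∑ i, (Mt : ℝ) * ∑ k, ‖B i k‖ ^ 2 :=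
        Finset.sum_le_sum fun i _ => h3 i
    _ = (Mt : ℝ) * ∑ j, ∑ i, ‖B i j‖ ^ 2 := by
        rw [← Finset.mul_sum, Finset.sum_comm]

theorem beamforming_gain_upper_bound
    (Mt N : ℕ) (hMt : 1 ≤ Mt) (hN : 1 ≤ N)
    (L P PA σz2 : ℝ) (hL : 0 < L) (hP : 0 ≤ P) (hσz : 0 ≤ σz2)
    (θ₀ θ₁ θ₂ : ℝ)
    (a : Fin N → ℝ) (ha : ∀ n, 0 ≤ a n) (hasum : 0 < ∑ n, (a n) ^ 2)
    (φ : Fin N → ℝ)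
    (R : Matrix (Fin Mt) (Fin Mt) ℂ) (hR : R.PosSemidef)
    (htr : (R.trace).re ≤ P)
    (hamp : (L * (steer θ₁ Mt ⬝ᵥ (R *ᵥ star (steer θ₁ Mt))).re + σz2) *
        (∑ n, (a n) ^ 2) ≤ PA) :
    (steer θ₀ N ⬝ᵥ ((Amat a * Phimat φ * Gmat L θ₁ θ₂ N Mt * R * (Gmat L θ₁ θ₂ N Mt)ᴴ *
        (Phimat φ)ᴴ * (Amat a)ᴴ) *ᵥ star (steer θ₀ N))).re
      ≤ L * (∑ n, a n) ^ 2 * (Mt : ℝ) *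
        min P ((PA / (∑ n, (a n) ^ 2) - σz2) / (L * (Mt : ℝ))) := by
  set u := steer θ₁ Mt with hu
  set v := steer θ₂ N with hv
  set w := steer θ₀ N with hw
  set s : ℂ := u ⬝ᵥ (R *ᵥ star u) with hs
  set d : Fin N → ℂ := fun n => (a n : ℂ) * Complex.exp (Complex.I * ((φ n : ℝ) : ℂ)) with hd
  set g : ℂ := ∑ i, w i * d i * v i with hg
  -- rewrite the big matrix as a diagonal sandwich
  have hAP : Amat a * Phimat φ = diagonal d := by
    simp [Amat, Phimat, diagonal_mul_diagonal, hd]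
  have hAPH : (Phimat φ)ᴴ * (Amat a)ᴴ = (diagonal d)ᴴ := by
    rw [← conjTranspose_mul, hAP]
  have hmid : Gmat L θ₁ θ₂ N Mt * R * (Gmat L θ₁ θ₂ N Mt)ᴴ
      = ((L : ℂ) * s) • vecMulVec v (star v) := by
    rw [Gmat, mid_identity]
    congr 2
    rw [← Complex.ofReal_mul, Real.mul_self_sqrt hL.le]
  have hrw : Amat a * Phimat φ * Gmat L θ₁ θ₂ N Mt * R * (Gmat L θ₁ θ₂ N Mt)ᴴ *
      (Phimat φ)ᴴ * (Amat a)ᴴ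
      = diagonal d * (((L : ℂ) * s) • vecMulVec v (star v)) * (diagonal d)ᴴ := by
    rw [mul_assoc _ (Phimat φ)ᴴ (Amat a)ᴴ, hAPH, ← hmid, hAP]
    simp only [Matrix.mul_assoc]
  have key : (w ⬝ᵥ ((Amat a * Phimat φ * Gmat L θ₁ θ₂ N Mt * R * (Gmat L θ₁ θ₂ N Mt)ᴴ *
      (Phimat φ)ᴴ * (Amat a)ᴴ) *ᵥ star w)).re = L * Complex.normSq g * s.re := by
    rw [hrw, diag_sandwich, ← hg, Complex.mul_conj, mul_comm ((L:ℂ) * s),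
      ← mul_assoc, ← Complex.ofReal_mul]
    rw [Complex.re_ofReal_mul]
    ring
  rw [key]
  -- basic facts
  have hTpos : (0:ℝ) < ∑ n, (a n) ^ 2 := hasum
  have hsre0 : 0 ≤ s.re := by
    have := hR.re_dotProduct_nonneg (star u)
    simpa [hs, star_star, dotProduct] using this
  -- bound on normSq g
  have hgabs : ‖g‖ ≤ ∑ n, a n := by
    calc ‖g‖ ≤ ∑ i, ‖w i * d i * v i‖ := by
          simpa [hg] using
            norm_sum_le Finset.univ (fun i => w i * d i * v i)
      _ = ∑ n, a n := by
          apply Finset.sum_congr rfl; intro i _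
          simp [hd, _root_.map_mul, steer_abs, hw, hv, Complex.norm_exp,
            Complex.norm_real, _root_.abs_of_nonneg (ha i)]
  have hgsq : Complex.normSq g ≤ (∑ n, a n) ^ 2 := by
    rw [← Complex.sq_norm]
    exact pow_le_pow_left₀ (norm_nonneg _) hgabs 2
  -- bound s.re ≤ Mt * P
  have hs1 : s.re ≤ (Mt : ℝ) * P := by
    obtain ⟨B, hB⟩ : ∃ B : Matrix (Fin Mt) (Fin Mt) ℂ, R = Bᴴ * B := by
      open scoped MatrixOrder in
      exact CStarAlgebra.nonneg_iff_eq_star_mul_self.mp hR.nonneg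
    have := quad_le_trace Mt B u (fun k => steer_abs θ₁ Mt k)
    rw [← hB] at this
    calc s.re ≤ (Mt : ℝ) * (R.trace).re := this
      _ ≤ (Mt : ℝ) * P := by
          exact mul_le_mul_of_nonneg_left htr (Nat.cast_nonneg Mt)
  -- bound s.re from the amplification constraint
  have hs2 : s.re ≤ (PA / (∑ n, (a n) ^ 2) - σz2) / L := by
    have h1 : L * s.re + σz2 ≤ PA / (∑ n, (a n) ^ 2) := by
      rw [le_div_iff₀ hTpos]
      exact hamp
    rw [le_div_iff₀ hL]
    linarith
  have hMt0 : (0:ℝ) < (Mt : ℝ) := by exact_mod_cast Nat.pos_of_ne_zero (by omega)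
  have hsmin : s.re ≤ (Mt : ℝ) * min P ((PA / (∑ n, (a n) ^ 2) - σz2) / (L * (Mt : ℝ))) := by
    rcases le_total P ((PA / (∑ n, (a n) ^ 2) - σz2) / (L * (Mt : ℝ))) with h | h
    · rw [min_eq_left h]; exact hs1
    · rw [min_eq_right h]
      have : (Mt : ℝ) * ((PA / (∑ n, (a n) ^ 2) - σz2) / (L * (Mt : ℝ)))
          = (PA / (∑ n, (a n) ^ 2) - σz2) / L := by
        field_simp
      rw [this]; exact hs2
  calc L * Complex.normSq g * s.re ≤ L * (∑ n, a n) ^ 2 * s.re := by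
        apply mul_le_mul_of_nonneg_right _ hsre0
        exact mul_le_mul_of_nonneg_left hgsq hL.le
    _ ≤ L * (∑ n, a n) ^ 2 * ((Mt : ℝ) * min P ((PA / (∑ n, (a n) ^ 2) - σz2) / (L * (Mt : ℝ)))) := by
        apply mul_le_mul_of_nonneg_left hsmin
        positivity
    _ = L * (∑ n, a n) ^ 2 * (Mt : ℝ) *
        min P ((PA / (∑ n, (a n) ^ 2) - σz2) / (L * (Mt : ℝ))) := by ring
end

section
/- Assume P ≥ 0 and P_A ≥ σ_z²·∑_{n=0}^{N−1} a_n², and set P_x = min{P, (P_A/(∑_{n=0}^{N−1} a_n²) − σ_z²)/(L·M_t)}. Let R* = (P_x/M_t)·conj(e(θ₁,M_t))·e(θ₁,M_t)ᵀ and let Φ* = diag(exp(iφ*_0),…,exp(iφ*_{N−1})) with φ*_n = −π·n·(sin θ₀ + sin θ₂). Then: (i) R* is Hermitian positive semidefinite with Re(tr R*) = P_x ≤ P; (ii) the IRS amplification power constraint holds, i.e. (L·Re(e(θ₁,M_t)ᵀ·R*·conj(e(θ₁,M_t))) + σ_z²)·(∑_{n} a_n²) ≤ P_A; and (iii) Re(e(θ₀,N)ᵀ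 · A·Φ*·G · R* · Gᴴ·(Φ*)ᴴ·Aᴴ · conj(e(θ₀,N))) = L·(∑_{n=0}^{N−1} a_n)²·M_t·P_x. -/
open Matrix Complex BigOperators
open scoped ComplexOrder

lemma steer_star (θ : ℝ) (K : ℕ) (k : Fin K) :
    (starRingEnd ℂ) (steer θ K k) = Complex.exp (-(Complex.I * ((Real.pi * (k : ℕ) * Real.sin θ : ℝ) : ℂ))) := by
  rw [steer, ← Complex.exp_conj]
  congr 1
  simp only [_root_.map_mul, Complex.conj_I, Complex.conj_ofReal]
  ring

lemma steer_mul_conj (θ : ℝ) (K : ℕ) (k : Fin K) :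
    steer θ K k * (starRingEnd ℂ) (steer θ K k) = 1 := by
  rw [steer_star, steer, ← Complex.exp_add]
  simp

lemma my_vecMulVec_mul {m n p : Type*} [Fintype n] (u : m → ℂ) (v w : n → ℂ) (x : p → ℂ) :
    vecMulVec u v * vecMulVec w x = (v ⬝ᵥ w) • vecMulVec u x := by
  ext i j
  simp only [Matrix.mul_apply, vecMulVec_apply, Matrix.smul_apply, dotProduct,
    Finset.sum_mul, smul_eq_mul]
  exact Finset.sum_congr rfl fun k _ => by ring

lemma my_vecMulVec_mulVec {m n : Type*} [Fintype n] (u : m → ℂ) (v x : n → ℂ) :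
    vecMulVec u v *ᵥ x = (v ⬝ᵥ x) • u := by
  funext i
  simp only [Matrix.mulVec, vecMulVec_apply, dotProduct, Pi.smul_apply, smul_eq_mul,
    Finset.sum_mul]
  exact Finset.sum_congr rfl fun k _ => by ring

theorem optimal_transmit_and_phase_design
    (Mt N : ℕ) (hMt : 1 ≤ Mt) (hN : 1 ≤ N)
    (L P PA σz2 : ℝ) (hL : 0 < L) (hP : 0 ≤ P) (hσz : 0 ≤ σz2)
    (θ₀ θ₁ θ₂ : ℝ)
    (a : Fin N → ℝ) (ha : ∀ n, 0 ≤ a n) (hasum : 0 < ∑ n, (a n) ^ 2)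
    (hPA : σz2 * (∑ n, (a n) ^ 2) ≤ PA) :
    let Px : ℝ := min P ((PA / (∑ n, (a n) ^ 2) - σz2) / (L * (Mt : ℝ)))
    let Rstar : Matrix (Fin Mt) (Fin Mt) ℂ :=
      ((Px / (Mt : ℝ) : ℝ) : ℂ) • vecMulVec (star (steer θ₁ Mt)) (steer θ₁ Mt)
    let Φstar : Matrix (Fin N) (Fin N) ℂ :=
      Phimat (fun n => -(Real.pi * (n : ℕ) * (Real.sin θ₀ + Real.sin θ₂)))
    -- (i) R* is Hermitian PSD with Re(tr R*) = P_x ≤ P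
    Rstar.PosSemidef ∧ (Rstar.trace).re = Px ∧ Px ≤ P ∧
    -- (ii) the IRS amplification power constraint holds
    (L * (steer θ₁ Mt ⬝ᵥ (Rstar *ᵥ star (steer θ₁ Mt))).re + σz2) *
        (∑ n, (a n) ^ 2) ≤ PA ∧
    -- (iii) the beamforming-gain objective attains the value L·(∑ₙ aₙ)²·M_t·P_x
    (steer θ₀ N ⬝ᵥ ((Amat a * Φstar * Gmat L θ₁ θ₂ N Mt * Rstar * (Gmat L θ₁ θ₂ N Mt)ᴴ *
        Φstarᴴ * (Amat a)ᴴ) *ᵥ star (steer θ₀ N))).re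
      = L * (∑ n, a n) ^ 2 * (Mt : ℝ) * Px := by
  intro Px Rstar Φstar
  have hMt0 : (0:ℝ) < (Mt:ℝ) := by exact_mod_cast hMt
  have hMtC : ((Mt:ℝ):ℂ) ≠ 0 := by exact_mod_cast hMt0.ne'
  set S : ℝ := ∑ n, (a n) ^ 2 with hSdef
  have hS : 0 < S := hasum
  have hPx0 : 0 ≤ Px := by
    apply le_min hP
    apply div_nonneg _ (by positivity)
    have : σz2 ≤ PA / S := (le_div_iff₀ hS).mpr hPA
    linarith
  have hPxP : Px ≤ P := min_le_left _ _
  set e₁ : Fin Mt → ℂ := steer θ₁ Mt with he₁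
  set e₀ : Fin N → ℂ := steer θ₀ N with he₀
  have hcc : ∀ k, e₁ k * star (e₁ k) = 1 := fun k => steer_mul_conj θ₁ Mt k
  have h11 : e₁ ⬝ᵥ star e₁ = (Mt : ℂ) := by
    simp only [dotProduct, Pi.star_apply]
    rw [Finset.sum_congr rfl fun k _ => hcc k]
    simp
  -- Part (i)
  have hPSD : Rstar.PosSemidef := by
    refine Matrix.PosSemidef.of_dotProduct_mulVec_nonneg ?_ ?_
    · show Rstarᴴ = Rstar
      ext i j
      simp only [Rstar, Matrix.conjTranspose_apply, Matrix.smul_apply, vecMulVec_apply,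
        Pi.star_apply, smul_eq_mul, star_mul', star_star, Complex.star_def, Complex.conj_ofReal,
        Complex.conj_conj]
      ring
    · intro x
      have hmv : Rstar *ᵥ x = ((Px / Mt : ℝ):ℂ) • ((e₁ ⬝ᵥ x) • star e₁) := by
        rw [show Rstar = ((Px / Mt : ℝ):ℂ) • vecMulVec (star e₁) e₁ from rfl,
          Matrix.smul_mulVec, my_vecMulVec_mulVec]
      rw [hmv]
      rw [dotProduct_smul, dotProduct_smul, Matrix.star_dotProduct_star]
      set s : ℂ := e₁ ⬝ᵥ x with hs
      have : ((Px / Mt : ℝ):ℂ) • s • star s = (((Px/Mt) * Complex.normSq s : ℝ) : ℂ) := by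
        simp only [smul_eq_mul]
        rw [show s * star s = (Complex.normSq s : ℂ) from Complex.mul_conj s]
        norm_cast
      rw [this]
      rw [Complex.zero_le_real]
      exact mul_nonneg (div_nonneg hPx0 hMt0.le) (Complex.normSq_nonneg s)
  have hTr : (Rstar.trace).re = Px := by
    have : Rstar.trace = ((Px / Mt : ℝ):ℂ) * (Mt : ℂ) := by
      have h1 : ∀ k : Fin Mt, Rstar k k = ((Px / Mt : ℝ):ℂ) := by
        intro k
        show ((Px / Mt : ℝ):ℂ) • (star (steer θ₁ Mt) k * steer θ₁ Mt k) = _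
        rw [smul_eq_mul, Pi.star_apply, mul_comm (star (steer θ₁ Mt k)),
          show steer θ₁ Mt k * star (steer θ₁ Mt k) = 1 from steer_mul_conj θ₁ Mt k, mul_one]
      show ∑ k, Rstar k k = _
      rw [Finset.sum_congr rfl fun k _ => h1 k]
      simp
      ring
    rw [this, ← Complex.ofReal_natCast, ← Complex.ofReal_mul, Complex.ofReal_re,
      div_mul_cancel₀ _ hMt0.ne']
  -- Part (ii)
  have hq : e₁ ⬝ᵥ (Rstar *ᵥ star e₁) = ((Px * Mt : ℝ) : ℂ) := by
    rw [show Rstar = ((Px / Mt : ℝ):ℂ) • vecMulVec (star e₁) e₁ from rfl,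
      Matrix.smul_mulVec, my_vecMulVec_mulVec, h11]
    rw [dotProduct_smul, dotProduct_smul, h11]
    push_cast
    field_simp
    have hM : (Mt:ℂ) ≠ 0 := by exact_mod_cast hMt0.ne'
    simp only [smul_eq_mul]
    field_simp
  have hii : (L * (e₁ ⬝ᵥ (Rstar *ᵥ star e₁)).re + σz2) * S ≤ PA := by
    rw [hq, Complex.ofReal_re]
    have hLMt : 0 < L * (Mt:ℝ) := by positivity
    have hPxle : Px ≤ (PA / S - σz2) / (L * Mt) := min_le_right _ _
    have h1 : Px * (L * Mt) ≤ PA / S - σz2 := (le_div_iff₀ hLMt).mp hPxle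
    have h2 : L * (Px * Mt) + σz2 ≤ PA / S := by nlinarith
    calc (L * (Px * Mt) + σz2) * S ≤ (PA / S) * S := by
          exact mul_le_mul_of_nonneg_right h2 hS.le
      _ = PA := div_mul_cancel₀ _ hS.ne'
  -- Part (iii)
  set w : Fin N → ℂ := fun n => (a n : ℂ) * star (e₀ n) with hw
  have hphase : ∀ n : Fin N,
      Complex.exp (Complex.I * ((-(Real.pi * (n:ℕ) * (Real.sin θ₀ + Real.sin θ₂)) : ℝ) : ℂ)) *
        steer θ₂ N n = star (e₀ n) := by
    intro n
    rw [steer, ← Complex.exp_add]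
    show _ = (starRingEnd ℂ) (steer θ₀ N n)
    rw [steer_star]
    congr 1
    push_cast
    ring
  have hB : Amat a * Φstar * Gmat L θ₁ θ₂ N Mt
      = (Real.sqrt L : ℂ) • vecMulVec w e₁ := by
    ext i j
    simp only [Amat, Φstar, Phimat, Matrix.diagonal_mul_diagonal, Gmat, Matrix.mul_smul,
      Matrix.smul_apply, Matrix.diagonal_mul, vecMulVec_apply, smul_eq_mul, hw]
    rw [← hphase i]
    ring
  have hBH : ((Real.sqrt L : ℂ) • vecMulVec w e₁)ᴴ
      = (Real.sqrt L : ℂ) • vecMulVec (star e₁) (star w) := by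
    ext i j
    simp only [Matrix.conjTranspose_apply, Matrix.smul_apply, vecMulVec_apply,
      Pi.star_apply, smul_eq_mul, star_mul', star_star, Complex.star_def, Complex.conj_ofReal]
    ring
  have hE : Amat a * Φstar * Gmat L θ₁ θ₂ N Mt * Rstar * (Gmat L θ₁ θ₂ N Mt)ᴴ *
        Φstarᴴ * (Amat a)ᴴ
      = (Amat a * Φstar * Gmat L θ₁ θ₂ N Mt) * Rstar *
          (Amat a * Φstar * Gmat L θ₁ θ₂ N Mt)ᴴ := by
    simp only [Matrix.conjTranspose_mul, Matrix.mul_assoc]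
  have hcc0 : ∀ n, e₀ n * star (e₀ n) = 1 := fun n => steer_mul_conj θ₀ N n
  have hd1 : e₀ ⬝ᵥ w = ((∑ n, a n : ℝ) : ℂ) := by
    simp only [dotProduct, hw]
    rw [Finset.sum_congr rfl fun n _ => show e₀ n * ((a n : ℂ) * star (e₀ n)) = (a n : ℂ) by
      rw [show e₀ n * ((a n:ℂ) * star (e₀ n)) = (a n:ℂ) * (e₀ n * star (e₀ n)) by ring,
        hcc0 n, mul_one]]
    push_cast; rfl
  have hd2 : star w ⬝ᵥ star e₀ = ((∑ n, a n : ℝ) : ℂ) := by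
    have key : ∀ n, (star w) n * (star e₀) n = (a n : ℂ) := by
      intro n
      simp only [Pi.star_apply, hw, star_mul', star_star]
      rw [show star ((a n : ℂ)) * e₀ n * star (e₀ n) = star ((a n:ℂ)) * (e₀ n * star (e₀ n)) by
        ring, hcc0 n, mul_one, Complex.star_def, Complex.conj_ofReal]
    simp only [dotProduct]
    rw [Finset.sum_congr rfl fun n _ => key n]
    push_cast; rfl
  have hval : e₀ ⬝ᵥ ((Amat a * Φstar * Gmat L θ₁ θ₂ N Mt * Rstar * (Gmat L θ₁ θ₂ N Mt)ᴴ *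
        Φstarᴴ * (Amat a)ᴴ) *ᵥ star e₀)
      = ((L * (∑ n, a n) ^ 2 * Mt * Px : ℝ) : ℂ) := by
    rw [hE, hB, hBH]
    rw [show Rstar = ((Px / Mt : ℝ):ℂ) • vecMulVec (star e₁) e₁ from rfl]
    simp only [Matrix.smul_mul, Matrix.mul_smul, my_vecMulVec_mul, smul_smul, h11]
    simp only [Matrix.smul_mulVec, my_vecMulVec_mulVec, dotProduct_smul, hd2, hd1,
      smul_eq_mul]
    push_cast
    rw [show (L : ℂ) = (Real.sqrt L : ℂ) * (Real.sqrt L : ℂ) by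
      rw [← Complex.ofReal_mul, Real.mul_self_sqrt hL.le]]
    field_simp
  refine ⟨hPSD, hTr, hPxP, hii, ?_⟩
  rw [hval, Complex.ofReal_re]
end

section
/- Let T > 0, β > 0, q ≥ 0 be real numbers and set κ = 1 + β. Define f : [0,∞) → ℝ by f(λ) = (q·√(T+λ) − T·β − λ·(κ²−1)/2) / (κ·√(T+λ·κ)). Then f is strictly decreasing on [0,∞). -/
set_option maxHeartbeats 1000000


theorem detection_argument_strictly_decreasing
    (T β q : ℝ) (hT : 0 < T) (hβ : 0 < β) (hq : 0 ≤ q) :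
    StrictAntiOn
      (fun l : ℝ =>
        (q * Real.sqrt (T + l) - T * β - l * ((1 + β) ^ 2 - 1) / 2) /
          ((1 + β) * Real.sqrt (T + l * (1 + β))))
      (Set.Ici 0) := by
  intro a ha b hb hab
  simp only [Set.mem_Ici] at ha hb
  have hκ0 : (0:ℝ) < 1 + β := by linarith
  have hTa : 0 < T + a := by linarith
  have hTb : 0 < T + b := by linarith
  have hTaκ : 0 < T + a * (1 + β) := by nlinarith
  have hTbκ : 0 < T + b * (1 + β) := by nlinarith
  set sa := Real.sqrt (T + a) with hsadef
  set sb := Real.sqrt (T + b) with hsbdef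
  set ua := Real.sqrt (T + a * (1 + β)) with huadef
  set ub := Real.sqrt (T + b * (1 + β)) with hubdef
  have hsa : 0 < sa := Real.sqrt_pos.2 hTa
  have hsb : 0 < sb := Real.sqrt_pos.2 hTb
  have hua : 0 < ua := Real.sqrt_pos.2 hTaκ
  have hub : 0 < ub := Real.sqrt_pos.2 hTbκ
  have hua2 : ua ^ 2 = T + a * (1 + β) := Real.sq_sqrt hTaκ.le
  have hub2 : ub ^ 2 = T + b * (1 + β) := Real.sq_sqrt hTbκ.le
  have huab : ua < ub := by
    rw [huadef, hubdef]
    exact Real.sqrt_lt_sqrt hTaκ.le (by nlinarith)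
  -- Claim 1: sb * ua ≤ sa * ub
  have h1 : sb * ua ≤ sa * ub := by
    have hprod : (T + b) * (T + a * (1 + β)) ≤ (T + a) * (T + b * (1 + β)) := by
      nlinarith [mul_nonneg (mul_nonneg hT.le hβ.le) (sub_nonneg.2 hab.le)]
    have h : Real.sqrt ((T + b) * (T + a * (1 + β))) ≤
        Real.sqrt ((T + a) * (T + b * (1 + β))) := Real.sqrt_le_sqrt hprod
    rwa [Real.sqrt_mul hTb.le, Real.sqrt_mul hTa.le] at h
  -- constants
  set c := T * β ^ 2 / (2 * (1 + β)) with hcdef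
  set d := ((1 + β) ^ 2 - 1) / (2 * (1 + β)) with hddef
  have hd : 0 < d := by
    rw [hddef]; apply div_pos; nlinarith; linarith
  have hca : T * β + a * ((1 + β) ^ 2 - 1) / 2 = c + d * ua ^ 2 := by
    rw [hua2, hcdef, hddef]; field_simp; ring
  have hcb : T * β + b * ((1 + β) ^ 2 - 1) / 2 = c + d * ub ^ 2 := by
    rw [hub2, hcdef, hddef]; field_simp; ring
  have h8 : c < d * T := by
    rw [hcdef, hddef, div_mul_eq_mul_div, div_lt_div_iff₀ (by positivity) (by positivity)]
    nlinarith
  show (q * sb - T * β - b * ((1 + β) ^ 2 - 1) / 2) / ((1 + β) * ub)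
      < (q * sa - T * β - a * ((1 + β) ^ 2 - 1) / 2) / ((1 + β) * ua)
  clear_value sa sb ua ub c d
  clear hsadef hsbdef huadef hubdef hcdef hddef
  have h1' : q * (sb * ua) ≤ q * (sa * ub) := mul_le_mul_of_nonneg_left h1 hq
  have hkey : c < d * (ua * ub) := by
    have h5 : ua ^ 2 ≤ ua * ub := by
      nlinarith [mul_le_mul_of_nonneg_left huab.le hua.le]
    have h6 : d * (T + a * (1 + β)) ≤ d * (ua * ub) := by
      rw [← hua2]; exact mul_le_mul_of_nonneg_left h5 hd.le
    have h7 : d * T ≤ d * (T + a * (1 + β)) :=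
      mul_le_mul_of_nonneg_left (by nlinarith) hd.le
    linarith
  have h2 : (T * β + a * ((1 + β) ^ 2 - 1) / 2) * ub
      < (T * β + b * ((1 + β) ^ 2 - 1) / 2) * ua := by
    rw [hca, hcb]
    nlinarith [mul_pos (sub_pos.2 huab) (sub_pos.2 hkey)]
  have h3 : q * sb * ua - (T * β + b * ((1 + β) ^ 2 - 1) / 2) * ua
      < q * sa * ub - (T * β + a * ((1 + β) ^ 2 - 1) / 2) * ub := by
    nlinarith [h1', h2]
  rw [div_lt_div_iff₀ (by positivity) (by positivity)]
  nlinarith [mul_lt_mul_of_pos_left h3 hκ0]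
end

section
/- Let T > 0, β > 0, q ≥ 0 be real numbers, set κ = 1 + β, and define f : [0,∞) → ℝ by f(λ) = (q·√(T+λ) − T·β − λ·(κ²−1)/2) / (κ·√(T+λ·κ)). Let γ denote the standard Gaussian measure on ℝ (mean 0, variance 1). Then the map λ ↦ γ({x : x > f(λ)}) is strictly increasing on [0,∞). -/
open ProbabilityTheory MeasureTheory

lemma gaussian_tail_strict_anti {c₁ c₂ : ℝ} (h : c₁ < c₂) :
    (gaussianReal 0 1) (Set.Ioi c₂) < (gaussianReal 0 1) (Set.Ioi c₁) := by
  have hunion : Set.Ioc c₁ c₂ ∪ Set.Ioi c₂ = Set.Ioi c₁ := Set.Ioc_union_Ioi_eq_Ioi h.le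
  have hdisj : Disjoint (Set.Ioc c₁ c₂) (Set.Ioi c₂) := Set.Ioc_disjoint_Ioi le_rfl
  have hmeas : (gaussianReal 0 1) (Set.Ioi c₁)
      = (gaussianReal 0 1) (Set.Ioc c₁ c₂) + (gaussianReal 0 1) (Set.Ioi c₂) := by
    rw [← hunion, measure_union hdisj measurableSet_Ioi]
  have hpos : 0 < (gaussianReal 0 1) (Set.Ioc c₁ c₂) := by
    rcases (zero_le : (0 : ENNReal) ≤ (gaussianReal 0 1) (Set.Ioc c₁ c₂)).eq_or_lt with hz | hz
    · exfalso
      have hac : (volume : MeasureTheory.Measure ℝ) ≪ gaussianReal 0 1 :=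
        gaussianReal_absolutelyContinuous' 0 one_ne_zero
      have := hac hz.symm
      rw [Real.volume_Ioc] at this
      simp only [ENNReal.ofReal_eq_zero, sub_nonpos] at this
      exact absurd this (not_le.mpr h)
    · exact hz
  have hfin : (gaussianReal 0 1) (Set.Ioi c₂) ≠ ⊤ := measure_ne_top _ _
  calc (gaussianReal 0 1) (Set.Ioi c₂)
      < (gaussianReal 0 1) (Set.Ioi c₂) + (gaussianReal 0 1) (Set.Ioc c₁ c₂) :=
        ENNReal.lt_add_right hfin hpos.ne'
    _ = (gaussianReal 0 1) (Set.Ioi c₁) := by rw [hmeas, add_comm]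

set_option maxHeartbeats 1000000 in
theorem detection_probability_strictly_increasing
    (T β q : ℝ) (hT : 0 < T) (hβ : 0 < β) (hq : 0 ≤ q) :
    StrictMonoOn
      (fun l : ℝ =>
        (gaussianReal 0 1)
          {x : ℝ |
            (q * Real.sqrt (T + l) - T * β - l * ((1 + β) ^ 2 - 1) / 2) /
              ((1 + β) * Real.sqrt (T + l * (1 + β))) < x})
      (Set.Ici 0) := by
  intro a ha b hb hab
  simp only [Set.mem_Ici] at ha hb
  set κ : ℝ := 1 + β with hκ
  have hκ1 : (1 : ℝ) < κ := by simp [hκ, hβ]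
  have hκ0 : (0 : ℝ) < κ := by linarith
  set c : ℝ := ((1 + β) ^ 2 - 1) / 2 with hc
  have hc0 : 0 < c := by
    have : (1:ℝ) < (1 + β) ^ 2 := by nlinarith
    simp only [hc]; linarith
  -- denominators
  have hTa : 0 < T + a * κ := by nlinarith
  have hTb : 0 < T + b * κ := by nlinarith
  have hTa' : 0 < T + a := by linarith
  have hTb' : 0 < T + b := by linarith
  set sa := Real.sqrt (T + a * κ) with hsa
  set sb := Real.sqrt (T + b * κ) with hsb
  have hsa0 : 0 < sa := Real.sqrt_pos.mpr hTa
  have hsb0 : 0 < sb := Real.sqrt_pos.mpr hTb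
  have hsa2 : sa ^ 2 = T + a * κ := Real.sq_sqrt hTa.le
  have hsb2 : sb ^ 2 = T + b * κ := Real.sq_sqrt hTb.le
  set ta := Real.sqrt (T + a) with hta
  set tb := Real.sqrt (T + b) with htb
  have hta0 : 0 < ta := Real.sqrt_pos.mpr hTa'
  have htb0 : 0 < tb := Real.sqrt_pos.mpr hTb'
  -- the q-term is antitone
  have hterm1 : q * tb / (κ * sb) ≤ q * ta / (κ * sa) := by
    rw [div_le_div_iff₀ (by positivity) (by positivity)]
    have hcross : tb * sa ≤ ta * sb := by
      have h1 : tb * sa = Real.sqrt ((T + b) * (T + a * κ)) := by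
        rw [Real.sqrt_mul hTb'.le]
      have h2 : ta * sb = Real.sqrt ((T + a) * (T + b * κ)) := by
        rw [Real.sqrt_mul hTa'.le]
      rw [h1, h2]
      apply Real.sqrt_le_sqrt
      have hid : (T + a) * (T + b * κ) - (T + b) * (T + a * κ) = T * (κ - 1) * (b - a) := by
        ring
      have hnn : 0 ≤ T * (κ - 1) * (b - a) :=
        mul_nonneg (mul_nonneg hT.le (by linarith)) (by linarith)
      linarith
    calc q * tb * (κ * sa) = q * κ * (tb * sa) := by ring
      _ ≤ q * κ * (ta * sb) := by
          apply mul_le_mul_of_nonneg_left hcross (by positivity)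
      _ = q * ta * (κ * sb) := by ring
  -- the subtracted term is strictly monotone
  have hPa : 0 < T * β + a * c := by nlinarith
  have hPb : 0 < T * β + b * c := by nlinarith
  have hkey : ((T * β + a * c) * sb) ^ 2 < ((T * β + b * c) * sa) ^ 2 := by
    have hcval : c = β * (2 + β) / 2 := by rw [hc]; ring
    have hident : (T * β + b * c) ^ 2 * (T + a * κ) - (T * β + a * c) ^ 2 * (T + b * κ)
        = (b - a) * (T ^ 2 * β ^ 2 + T * c ^ 2 * (a + b) + κ * c ^ 2 * (a * b)) := by
      rw [hcval, hκ]; ring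
    have hbr : 0 < T ^ 2 * β ^ 2 + T * c ^ 2 * (a + b) + κ * c ^ 2 * (a * b) := by
      have h1 : 0 < T ^ 2 * β ^ 2 := by positivity
      have h2 : 0 ≤ T * c ^ 2 * (a + b) := by positivity
      have h3 : 0 ≤ κ * c ^ 2 * (a * b) := by positivity
      linarith
    have hprod : 0 < (b - a) * (T ^ 2 * β ^ 2 + T * c ^ 2 * (a + b) + κ * c ^ 2 * (a * b)) :=
      mul_pos (by linarith) hbr
    calc ((T * β + a * c) * sb) ^ 2 = (T * β + a * c) ^ 2 * (T + b * κ) := by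
          rw [mul_pow, hsb2]
      _ < (T * β + b * c) ^ 2 * (T + a * κ) := by linarith
      _ = ((T * β + b * c) * sa) ^ 2 := by rw [mul_pow, hsa2]
  have hkey' : (T * β + a * c) * sb < (T * β + b * c) * sa :=
    lt_of_pow_lt_pow_left₀ 2 (by positivity) hkey
  have hterm2 : (T * β + a * c) / (κ * sa) < (T * β + b * c) / (κ * sb) := by
    rw [div_lt_div_iff₀ (by positivity) (by positivity)]
    calc (T * β + a * c) * (κ * sb) = κ * ((T * β + a * c) * sb) := by ring
      _ < κ * ((T * β + b * c) * sa) := by exact mul_lt_mul_of_pos_left hkey' hκ0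
      _ = (T * β + b * c) * (κ * sa) := by ring
  -- conclude f(b) < f(a)
  have hfb_lt_fa :
      (q * tb - T * β - b * ((1 + β) ^ 2 - 1) / 2) / (κ * sb)
        < (q * ta - T * β - a * ((1 + β) ^ 2 - 1) / 2) / (κ * sa) := by
    have heqa : (q * ta - T * β - a * ((1 + β) ^ 2 - 1) / 2) / (κ * sa)
        = q * ta / (κ * sa) - (T * β + a * c) / (κ * sa) := by
      rw [hc]; field_simp; ring
    have heqb : (q * tb - T * β - b * ((1 + β) ^ 2 - 1) / 2) / (κ * sb)
        = q * tb / (κ * sb) - (T * β + b * c) / (κ * sb) := by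
      rw [hc]; field_simp; ring
    rw [heqa, heqb]
    linarith
  have hsets : ∀ l : ℝ, {x : ℝ |
      (q * Real.sqrt (T + l) - T * β - l * ((1 + β) ^ 2 - 1) / 2) /
        ((1 + β) * Real.sqrt (T + l * (1 + β))) < x}
      = Set.Ioi ((q * Real.sqrt (T + l) - T * β - l * ((1 + β) ^ 2 - 1) / 2) /
        ((1 + β) * Real.sqrt (T + l * (1 + β)))) := fun l => rfl
  simp only [hsets]
  exact gaussian_tail_strict_anti hfb_lt_fa
end
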